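/- Let S be an intra-regular AG-groupoid with left identity. Then every element a of S can be written as a = (((x*e)*y)*a)*a for some x, y in S (where e is the left identity); consequently every fuzzy left ideal μ of S is idempotent under the sup-min convolution product: μ∘μ = μ. -/

import Mathlib

/-!
The left invertive law `(ab)c = (cb)a` already gives the medial law `(ab)(cd) = (ac)(bd)`, and with
a left identity also `a(bc) = b(ac)`. Rewriting `a = (x(aa))y = (x(aa))(ey)` by these two laws and
once more by left invertivity yields `a = (((xe)y)a)a`. So every `a` factors as `(wa)a`, and for a
fuzzy left ideal `μ` this factorization attains `min (μ (wa)) (μ a) = μ a`, the bound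
`min (μ b) (μ c) ≤ μ c ≤ μ (bc)` valid for every factorization `a = bc`.
-/

section LeftInvertive

variable {S : Type*} (mul : S → S → S) (hinv : ∀ a b c : S, mul (mul a b) c = mul (mul c b) a)
include hinv

theorem medial_of_left_invertive (a b c d : S) :
    mul (mul a b) (mul c d) = mul (mul a c) (mul b d) := by
  rw [hinv a b (mul c d), hinv c d b, hinv (mul b d) c a]

theorem left_comm_of_left_invertive {e : S} (he : ∀ x : S, mul e x = x) (a b c : S) :
    mul a (mul b c) = mul b (mul a c) := by
  rw [← he a, ← he b, medial_of_left_invertive mul hinv, he, he a]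

theorem eq_mul_mul_of_intra_regular {e : S} (he : ∀ x : S, mul e x = x) {a x y : S}
    (hxy : a = mul (mul x (mul a a)) y) :
    a = mul (mul (mul (mul x e) y) a) a :=
  calc a = mul (mul x (mul a a)) (mul e y) := by rw [he]; exact hxy
    _ = mul (mul x e) (mul (mul a a) y) := medial_of_left_invertive mul hinv ..
    _ = mul (mul a a) (mul (mul x e) y) := left_comm_of_left_invertive mul hinv he ..
    _ = mul (mul (mul (mul x e) y) a) a := (hinv ..).symm

end LeftInvertive

theorem sSup_min_factorizations_eq_of_eq_mul_mul {S : Type*} (mul : S → S → S) (μ : S → ℝ)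
    (hμ : ∀ u v : S, μ v ≤ μ (mul u v)) {a w : S} (ha : a = mul (mul w a) a) :
    sSup {t : ℝ | ∃ b c : S, a = mul b c ∧ t = min (μ b) (μ c)} = μ a := by
  have hbound : ∀ t ∈ {t : ℝ | ∃ b c : S, a = mul b c ∧ t = min (μ b) (μ c)}, t ≤ μ a := by
    rintro t ⟨b, c, rfl, rfl⟩
    exact (min_le_right _ _).trans (hμ b c)
  have hmem : μ a ∈ {t : ℝ | ∃ b c : S, a = mul b c ∧ t = min (μ b) (μ c)} :=
    ⟨mul w a, a, ha, (min_eq_right (hμ w a)).symm⟩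
  exact le_antisymm (csSup_le ⟨_, hmem⟩ hbound) (le_csSup ⟨μ a, hbound⟩ hmem)

/-- In an intra-regular AG-groupoid with left identity, every a equals
    (((x*e)*y)*a)*a for some x, y; consequently every fuzzy left ideal is
    idempotent under the sup-min convolution product. -/
theorem fuzzy_left_idempotent {S : Type*} (mul : S → S → S)
    (hinv : ∀ a b c : S, mul (mul a b) c = mul (mul c b) a)
    (e : S) (he : ∀ x : S, mul e x = x)
    (hintra : ∀ a : S, ∃ x y : S, a = mul (mul x (mul a a)) y) :
    (∀ a : S, ∃ x y : S, a = mul (mul (mul (mul x e) y) a) a) ∧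
    (∀ μ : S → ℝ, (∀ x, 0 ≤ μ x) → (∀ x, μ x ≤ 1) →
      (∀ u v : S, μ v ≤ μ (mul u v)) →
      (∀ a : S,
        sSup {t : ℝ | ∃ b c : S, a = mul b c ∧ t = min (μ b) (μ c)}
          = μ a)) := by
  have hdecomp : ∀ a : S, ∃ x y : S, a = mul (mul (mul (mul x e) y) a) a := fun a =>
    let ⟨x, y, hxy⟩ := hintra a
    ⟨x, y, eq_mul_mul_of_intra_regular mul hinv he hxy⟩
  refine ⟨hdecomp, fun μ _ _ hμ a => ?_⟩
  obtain ⟨x, y, hxy⟩ := hdecomp a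
  exact sSup_min_factorizations_eq_of_eq_mul_mul mul μ hμ hxy
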